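/- Let d ≥ 1, let A = ℂ[t_1^{±1}, …, t_d^{±1}] be the Laurent polynomial ring in d commuting variables over ℂ (realized, e.g., as the group algebra of ℤ^d over ℂ), and let w_d = Der_ℂ(A) be the generalized Witt algebra, i.e., the Lie algebra of all ℂ-linear derivations of A with bracket the commutator. Then for every integer N ≥ 3, every N-derivation of w_d is a derivation of w_d; that is, Der^(N)(w_d) = Der(w_d). -/

import Mathlib

open scoped BigOperators

/-- Right-iterated Lie bracket `[x₁, x₂, …, xₖ] = [x₁, [x₂, [… [x_{k-1}, xₖ] …]]]`. -/
def itBracket {L : Type*} [LieRing L] : List L → L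
  | [] => 0
  | [a] => a
  | a :: b :: l => ⁅a, itBracket (b :: l)⁆

/-- `φ` is an `N`-derivation of the Lie algebra `L`:
`φ [x₁, …, x_N] = ∑ i, [x₁, …, x_{i-1}, φ xᵢ, x_{i+1}, …, x_N]`. -/
def IsNDeriv (F : Type*) {L : Type*} [CommRing F] [LieRing L] [LieAlgebra F L]
    (N : ℕ) (φ : L →ₗ[F] L) : Prop :=
  ∀ x : Fin N → L,
    φ (itBracket (List.ofFn x)) =
      ∑ i : Fin N, itBracket (List.ofFn (Function.update x i (φ (x i))))

/-- The Laurent polynomial ring `ℂ[t₁^{±1}, …, t_d^{±1}]`, realized as the group algebra of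
`ℤ^d` over `ℂ`. -/
abbrev LaurentAlg (d : ℕ) : Type := AddMonoidAlgebra ℂ (Fin d → ℤ)

/-- The generalized Witt algebra `w_d`: the Lie algebra of `ℂ`-linear derivations of the
Laurent polynomial ring `ℂ[t₁^{±1}, …, t_d^{±1}]`, with bracket the commutator. -/
abbrev WittAlg (d : ℕ) : Type := Derivation ℂ (LaurentAlg d) (LaurentAlg d)

section Abstract

variable {L : Type*} [LieRing L] [LieAlgebra ℂ L]

lemma itBracket_cons (a : L) (l : List L) (hl : l ≠ []) :
    itBracket (a :: l) = ⁅a, itBracket l⁆ := by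
  cases l with
  | nil => exact absurd rfl hl
  | cons b t => rfl

/-- Sum of replacing each entry by `φ` of it. -/
def brS (φ : L →ₗ[ℂ] L) : List L → L
  | [] => 0
  | [a] => φ a
  | a :: b :: l => ⁅φ a, itBracket (b :: l)⁆ + ⁅a, brS φ (b :: l)⁆

lemma brS_cons (φ : L →ₗ[ℂ] L) (a : L) (l : List L) (hl : l ≠ []) :
    brS φ (a :: l) = ⁅φ a, itBracket l⁆ + ⁅a, brS φ l⁆ := by
  cases l with
  | nil => exact absurd rfl hl
  | cons b t => rfl

lemma ofFn_update_zero {n : ℕ} (x : Fin (n+1) → L) (v : L) :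
    List.ofFn (Function.update x 0 v) = v :: List.ofFn (x ∘ Fin.succ) := by
  have ht : (fun i : Fin n => Function.update x 0 v i.succ) = x ∘ Fin.succ := by
    funext i
    simp [Function.update_apply, Fin.succ_ne_zero]
  rw [List.ofFn_succ, ht, Function.update_self]

lemma ofFn_update_succ {n : ℕ} (x : Fin (n+1) → L) (i : Fin n) (v : L) :
    List.ofFn (Function.update x i.succ v) = x 0 :: List.ofFn (Function.update (x ∘ Fin.succ) i v) := by
  have h0 : Function.update x i.succ v 0 = x 0 :=
    Function.update_of_ne (Fin.succ_ne_zero i).symm _ _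
  have ht : (fun j : Fin n => Function.update x i.succ v j.succ) = Function.update (x ∘ Fin.succ) i v := by
    funext j
    simp only [Function.update_apply]
    by_cases h : j = i
    · simp [h]
    · rw [if_neg (fun hc : j.succ = i.succ => h (Fin.succ_injective _ hc))]
      simp [Function.update_apply, h]
  rw [List.ofFn_succ, h0, ht]

lemma sum_update (φ : L →ₗ[ℂ] L) : ∀ (n : ℕ) (x : Fin n → L),
    ∑ i : Fin n, itBracket (List.ofFn (Function.update x i (φ (x i)))) = brS φ (List.ofFn x) := by
  intro n
  induction n with
  | zero => intro x; simp [brS]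
  | succ n ih =>
    intro x
    rw [Fin.sum_univ_succ]
    rcases Nat.eq_zero_or_pos n with hn | hn
    · subst hn
      simp [ofFn_update_zero, brS, itBracket]
    · have hne : List.ofFn (x ∘ Fin.succ) ≠ [] := by
        simp [List.ofFn_eq_nil_iff]; omega
      have h0 : itBracket (List.ofFn (Function.update x 0 (φ (x 0))))
          = ⁅φ (x 0), itBracket (List.ofFn (x ∘ Fin.succ))⁆ := by
        rw [ofFn_update_zero, itBracket_cons _ _ hne]
      have hs : ∀ i : Fin n, itBracket (List.ofFn (Function.update x i.succ (φ (x i.succ))))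
          = ⁅x 0, itBracket (List.ofFn (Function.update (x ∘ Fin.succ) i (φ ((x ∘ Fin.succ) i))))⁆ := by
        intro i
        rw [ofFn_update_succ, itBracket_cons]
        · rfl
        · simp [List.ofFn_eq_nil_iff]; omega
      rw [h0]
      simp_rw [hs]
      have hlie : ∀ (g : Fin n → L), (∑ i, ⁅x 0, g i⁆) = ⁅x 0, ∑ i, g i⁆ := fun g =>
        (map_sum (LieModule.toEnd ℂ L L (x 0)) g Finset.univ).symm
      rw [hlie, ih (x ∘ Fin.succ), List.ofFn_succ,
        show (fun i : Fin n => x i.succ) = x ∘ Fin.succ from rfl, brS_cons _ _ _ hne]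

def Dl (φ : L →ₗ[ℂ] L) (l : List L) : L := brS φ l - φ (itBracket l)

/-- The defect bilinear map. -/
def Fb (φ : L →ₗ[ℂ] L) (y w : L) : L := φ ⁅y, w⁆ - ⁅φ y, w⁆ - ⁅y, φ w⁆

lemma Dl_cons (φ : L →ₗ[ℂ] L) (a : L) (l : List L) (hl : l ≠ []) :
    Dl φ (a :: l) = ⁅a, Dl φ l⁆ - Fb φ a (itBracket l) := by
  rw [Dl, brS_cons _ _ _ hl, itBracket_cons _ _ hl, Dl, Fb, lie_sub]
  abel

lemma span_brackets_k
    (hperf : ∀ w : L, w ∈ Submodule.span ℂ {u | ∃ a b : L, u = ⁅a, b⁆}) :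
    ∀ k : ℕ, 1 ≤ k →
      ∀ w : L, w ∈ Submodule.span ℂ {u | ∃ t : List L, t.length = k ∧ itBracket t = u} := by
  intro k hk
  induction k, hk using Nat.le_induction with
  | base =>
    intro w
    exact Submodule.subset_span ⟨[w], rfl, rfl⟩
  | succ k hk ih =>
    intro w
    refine Submodule.span_le.mpr ?_ (hperf w)
    rintro u ⟨a, b, rfl⟩
    have hb := ih b
    refine Submodule.span_induction
      (p := fun b _ => ⁅a, b⁆ ∈ Submodule.span ℂ
        {u | ∃ t : List L, t.length = k + 1 ∧ itBracket t = u}) ?_ ?_ ?_ ?_ hb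
    · rintro x ⟨t, ht, rfl⟩
      have htne : t ≠ [] := by
        intro h; rw [h] at ht; simp at ht; omega
      exact Submodule.subset_span ⟨a :: t, by simp [ht], itBracket_cons a t htne⟩
    · simp
    · intro x y _ _ hx hy
      rw [lie_add]; exact Submodule.add_mem _ hx hy
    · intro c x _ hx
      rw [lie_smul]; exact Submodule.smul_mem _ c hx

lemma mkRho (hcent : ∀ v : L, (∀ x : L, ⁅x, v⁆ = 0) → v = 0)
    (S : Set L) (hS : Submodule.span ℂ S = ⊤)
    (R : L → L → L)
    (hadd : ∀ y w w', R y (w + w') = R y w + R y w')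
    (hsmul : ∀ y (c : ℂ) w, R y (c • w) = c • R y w)
    (hex : ∀ w ∈ S, ∃ v : L, ∀ y, ⁅y, v⁆ = R y w) :
    ∃ ρ : L →ₗ[ℂ] L, ∀ w y, ⁅y, ρ w⁆ = R y w := by
  have hzero : ∀ y, R y 0 = 0 := by
    intro y
    have := hadd y 0 0
    rw [add_zero] at this
    have h := hadd y 0 0
    rw [add_zero] at h
    first
    | exact add_eq_left.mp h.symm
    | exact add_left_eq_self.mp h.symm
    | exact self_eq_add_right.mp h
    | exact self_eq_add_left.mp h
  have hall : ∀ w : L, ∃ v : L, ∀ y, ⁅y, v⁆ = R y w := by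
    intro w
    have hw : w ∈ Submodule.span ℂ S := hS ▸ Submodule.mem_top
    refine Submodule.span_induction
      (p := fun w _ => ∃ v : L, ∀ y, ⁅y, v⁆ = R y w) hex ?_ ?_ ?_ hw
    · exact ⟨0, fun y => by rw [lie_zero, hzero]⟩
    · rintro w w' _ _ ⟨v, hv⟩ ⟨v', hv'⟩
      exact ⟨v + v', fun y => by rw [lie_add, hv, hv', hadd]⟩
    · rintro c w _ ⟨v, hv⟩
      exact ⟨c • v, fun y => by rw [lie_smul, hv, hsmul]⟩
  choose v hv using hall
  have hadd' : ∀ w w', v (w + w') = v w + v w' := by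
    intro w w'
    have := hcent (v (w + w') - (v w + v w')) (fun y => by
      rw [lie_sub, lie_add, hv, hv, hv, hadd, sub_self])
    linear_combination (norm := abel) this
  have hsmul' : ∀ (c : ℂ) w, v (c • w) = c • v w := by
    intro c w
    have := hcent (v (c • w) - c • v w) (fun y => by
      rw [lie_sub, lie_smul, hv, hv, hsmul, sub_self])
    linear_combination (norm := abel) this
  exact ⟨⟨⟨v, hadd'⟩, hsmul'⟩, fun w y => hv w y⟩

theorem abstract_nderiv
    (hcent : ∀ v : L, (∀ x : L, ⁅x, v⁆ = 0) → v = 0)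
    (hperf : ∀ w : L, w ∈ Submodule.span ℂ {u | ∃ a b : L, u = ⁅a, b⁆})
    (N : ℕ) (hN : 3 ≤ N) (φ : L →ₗ[ℂ] L) (hφ : IsNDeriv ℂ N φ) :
    ∀ x y : L, φ ⁅x, y⁆ = ⁅φ x, y⁆ + ⁅x, φ y⁆ := by
  -- the N-derivation hypothesis in list form
  have hDN : ∀ l : List L, l.length = N → Dl φ l = 0 := by
    intro l hl
    subst hl
    have h := hφ l.get
    rw [sum_update, List.ofFn_get] at h
    rw [Dl, ← h, sub_self]
  -- Bk k: set of iterated brackets of length k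
  set Bk : ℕ → Set L := fun k => {u | ∃ t : List L, t.length = k ∧ itBracket t = u} with hBk
  have hspan : ∀ k : ℕ, 1 ≤ k → Submodule.span ℂ (Bk k) = ⊤ := by
    intro k hk
    rw [eq_top_iff]
    exact fun w _ => span_brackets_k hperf k hk w
  have hlen_ne : ∀ (t : List L) (k : ℕ), t.length = k → 1 ≤ k → t ≠ [] := by
    intro t k h h1 hn
    rw [hn] at h; simp at h; omega
  -- (★1)
  have hF1 : ∀ t : List L, t.length = N - 1 → ∀ y : L, ⁅y, Dl φ t⁆ = Fb φ y (itBracket t) := by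
    intro t ht y
    have h0 := hDN (y :: t) (by simp [ht]; omega)
    rw [Dl_cons _ _ _ (hlen_ne t (N-1) ht (by omega))] at h0
    exact sub_eq_zero.mp h0
  -- construct ψ with ⁅y, ψ w⁆ = Fb φ y w
  have hFadd : ∀ (y w w' : L), Fb φ y (w + w') = Fb φ y w + Fb φ y w' := by
    intro y w w'; simp only [Fb, lie_add, map_add]; abel
  have hFsmul : ∀ (y : L) (c : ℂ) (w : L), Fb φ y (c • w) = c • Fb φ y w := by
    intro y c w; simp only [Fb, lie_smul, map_smul, smul_sub]
  obtain ⟨ψ, hψ⟩ : ∃ ψ : L →ₗ[ℂ] L, ∀ w y, ⁅y, ψ w⁆ = Fb φ y w := by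
    refine mkRho hcent (Bk (N-1)) (hspan (N-1) (by omega)) (Fb φ) hFadd hFsmul ?_
    rintro w ⟨t, ht, rfl⟩
    exact ⟨Dl φ t, fun y => hF1 t ht y⟩
  -- the family of maps ρ_k
  have hex_rho : ∀ k : ℕ, 2 ≤ k → k ≤ N - 1 →
      ∃ ρ : L →ₗ[ℂ] L, ∀ t : List L, t.length = k → Dl φ t = ρ (itBracket t) := by
    have base : ∃ ρ : L →ₗ[ℂ] L, ∀ t : List L, t.length = N - 1 → Dl φ t = ρ (itBracket t) := by
      refine ⟨ψ, fun t ht => ?_⟩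
      have h := hcent (Dl φ t - ψ (itBracket t))
        (fun y => by rw [lie_sub, hψ, hF1 t ht, sub_self])
      exact sub_eq_zero.mp h
    have step : ∀ k : ℕ, 2 ≤ k → k + 1 ≤ N - 1 →
        (∃ ρ : L →ₗ[ℂ] L, ∀ t : List L, t.length = k + 1 → Dl φ t = ρ (itBracket t)) →
        ∃ ρ : L →ₗ[ℂ] L, ∀ t : List L, t.length = k → Dl φ t = ρ (itBracket t) := by
      rintro k hk2 hk1 ⟨ρ', hρ'⟩
      obtain ⟨ρ, hρ⟩ : ∃ ρ : L →ₗ[ℂ] L,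
          ∀ w y, ⁅y, ρ w⁆ = ρ' ⁅y, w⁆ + ⁅y, ψ w⁆ := by
        refine mkRho hcent (Bk k) (hspan k (by omega))
          (fun y w => ρ' ⁅y, w⁆ + ⁅y, ψ w⁆) ?_ ?_ ?_
        · intro y w w'; simp only [lie_add, map_add]; abel
        · intro y c w; simp only [lie_smul, map_smul, smul_add]
        · rintro w ⟨s, hs, rfl⟩
          refine ⟨Dl φ s, fun y => ?_⟩
          have hsne : s ≠ [] := hlen_ne s k hs (by omega)
          have h1 := hρ' (y :: s) (by simp [hs])
          rw [Dl_cons _ _ _ hsne, itBracket_cons _ _ hsne] at h1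
          show ⁅y, Dl φ s⁆ = ρ' ⁅y, itBracket s⁆ + ⁅y, ψ (itBracket s)⁆
          rw [← h1, hψ]
          abel
      refine ⟨ρ, fun t ht => ?_⟩
      have htne : t ≠ [] := hlen_ne t k ht (by omega)
      have h := hcent (Dl φ t - ρ (itBracket t)) (fun y => by
        have h1 := hρ' (y :: t) (by simp [ht])
        rw [Dl_cons _ _ _ htne, itBracket_cons _ _ htne] at h1
        rw [lie_sub, hρ, ← h1, hψ]
        abel)
      exact sub_eq_zero.mp h
    -- downward induction
    have main : ∀ m k : ℕ, 2 ≤ k → k ≤ N - 1 → N - 1 - k = m →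
        ∃ ρ : L →ₗ[ℂ] L, ∀ t : List L, t.length = k → Dl φ t = ρ (itBracket t) := by
      intro m
      induction m with
      | zero => intro k hk2 hk1 hm; have : k = N - 1 := by omega
                subst this; exact base
      | succ m ih =>
        intro k hk2 hk1 hm
        exact step k hk2 (by omega) (ih (k+1) (by omega) (by omega) (by omega))
    exact fun k hk2 hk1 => main (N - 1 - k) k hk2 hk1 rfl
  choose! rho hrho using hex_rho
  -- if v is killed by all brackets then v = 0
  have bracketZero : ∀ v : L, (∀ a b : L, ⁅⁅a, b⁆, v⁆ = 0) → v = 0 := by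
    intro v hv
    refine hcent v (fun x => ?_)
    refine Submodule.span_induction (p := fun x _ => ⁅x, v⁆ = 0) ?_ ?_ ?_ ?_ (hperf x)
    · rintro u ⟨a, b, rfl⟩; exact hv a b
    · simp
    · intro a b _ _ ha hb; rw [add_lie, ha, hb, add_zero]
    · intro c a _ ha; rw [smul_lie, ha, smul_zero]
  have rho_top : ∀ w, rho (N - 1) w = ψ w := by
    have h : rho (N - 1) = ψ := by
      refine LinearMap.ext_on (hspan (N - 1) (by omega)) ?_
      rintro u ⟨t, ht, rfl⟩
      have h1 := hcent (Dl φ t - ψ (itBracket t))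
        (fun y => by rw [lie_sub, hψ, hF1 t ht, sub_self])
      rw [← hrho (N - 1) (by omega) le_rfl t ht]
      exact sub_eq_zero.mp h1
    exact fun w => by rw [h]
  have chain : ∀ k, 2 ≤ k → k + 1 ≤ N - 1 → ∀ y w : L,
      rho (k + 1) ⁅y, w⁆ = ⁅y, rho k w⁆ - ⁅y, ψ w⁆ := by
    intro k hk2 hk1 y
    have hfg : (rho (k + 1)).comp (LieAlgebra.ad ℂ L y) =
        (LieAlgebra.ad ℂ L y).comp (rho k - ψ) := by
      refine LinearMap.ext_on (hspan k (by omega)) ?_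
      rintro u ⟨s, hs, rfl⟩
      have hsne : s ≠ [] := hlen_ne s k hs (by omega)
      have h1 := hrho (k + 1) (by omega) hk1 (y :: s) (by simp [hs])
      rw [Dl_cons _ _ _ hsne, itBracket_cons _ _ hsne] at h1
      have h2 := hrho k hk2 (by omega) s hs
      simp only [LinearMap.comp_apply, LieAlgebra.ad_apply, LinearMap.sub_apply]
      rw [← h1, ← h2, lie_sub, hψ]
    intro w
    have h3 := LinearMap.congr_fun hfg w
    simp only [LinearMap.comp_apply, LieAlgebra.ad_apply, LinearMap.sub_apply] at h3
    rw [h3, lie_sub]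
  have hg2 : ∀ a b : L, rho 2 ⁅a, b⁆ = -⁅a, ψ b⁆ := by
    intro a b
    have h := hrho 2 le_rfl (by omega) [a, b] rfl
    have hDl2 : Dl φ [a, b] = -Fb φ a b := by
      show brS φ [a, b] - φ (itBracket [a, b]) = -Fb φ a b
      show ⁅φ a, itBracket [b]⁆ + ⁅a, brS φ [b]⁆ - φ (itBracket [a, b]) = -Fb φ a b
      show ⁅φ a, b⁆ + ⁅a, φ b⁆ - φ ⁅a, itBracket [b]⁆ = -Fb φ a b
      rw [Fb]
      show ⁅φ a, b⁆ + ⁅a, φ b⁆ - φ ⁅a, b⁆ = -(φ ⁅a, b⁆ - ⁅φ a, b⁆ - ⁅a, φ b⁆)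
      abel
    have hit : itBracket [a, b] = ⁅a, b⁆ := rfl
    rw [hDl2, hit, ← hψ] at h
    exact h.symm
  -- the σ-maps
  set sfun : ℕ → L → L := fun k w => if k = 2 then -(ψ w) else rho (k - 1) w - ψ w with hsfun
  have hsfun2 : ∀ w, sfun 2 w = -(ψ w) := fun w => by simp [hsfun]
  have hsfun_ne : ∀ k w, k ≠ 2 → sfun k w = rho (k - 1) w - ψ w := by
    intro k w h; simp only [hsfun]; rw [if_neg h]
  have hs : ∀ k, 2 ≤ k → k ≤ N - 1 → ∀ y w : L, rho k ⁅y, w⁆ = ⁅y, sfun k w⁆ := by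
    intro k hk2 hk1 y w
    by_cases hk : k = 2
    · subst hk
      rw [hsfun2, hg2, lie_neg]
    · have hk3 : 3 ≤ k := by omega
      have hkk : k - 1 + 1 = k := by omega
      have h := chain (k - 1) (by omega) (by omega) y w
      rw [hkk] at h
      rw [h, hsfun_ne k w hk, lie_sub]
  have hψbr : ∀ y w : L, ψ ⁅y, w⁆ = ⁅y, sfun (N - 1) w⁆ := by
    intro y w
    rw [← rho_top, hs (N - 1) (by omega) le_rfl]
  have hrec : ∀ k, 2 ≤ k → k + 1 ≤ N - 1 → ∀ w : L,
      sfun (k + 1) w = sfun k w - sfun (N - 1) w := by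
    intro k hk2 hk1 w
    have hne2 : (k + 1 : ℕ) ≠ 2 := by omega
    have hred : ∀ u : L, sfun (k + 1) ⁅u, w⁆ = ⁅u, sfun k w - sfun (N - 1) w⁆ := by
      intro u
      rw [hsfun_ne (k + 1) _ hne2, Nat.add_sub_cancel, hs k hk2 (by omega), hψbr, ← lie_sub]
    have key : ∀ a b : L, ⁅⁅a, b⁆, sfun (k + 1) w - (sfun k w - sfun (N - 1) w)⁆ = 0 := by
      intro y a
      have e1 : rho (k + 1) ⁅y, ⁅a, w⁆⁆ = ⁅y, ⁅a, sfun k w - sfun (N - 1) w⁆⁆ := by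
        rw [hs (k + 1) (by omega) hk1, hred a]
      have e2 : rho (k + 1) ⁅y, ⁅a, w⁆⁆ =
          ⁅⁅y, a⁆, sfun (k + 1) w⁆ + ⁅a, ⁅y, sfun k w - sfun (N - 1) w⁆⁆ := by
        rw [show ⁅y, ⁅a, w⁆⁆ = ⁅⁅y, a⁆, w⁆ + ⁅a, ⁅y, w⁆⁆ from leibniz_lie y a w, map_add,
          hs (k + 1) (by omega) hk1, hs (k + 1) (by omega) hk1, hred y]
      have e3 : ⁅y, ⁅a, sfun k w - sfun (N - 1) w⁆⁆ =
          ⁅⁅y, a⁆, sfun k w - sfun (N - 1) w⁆ + ⁅a, ⁅y, sfun k w - sfun (N - 1) w⁆⁆ :=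
        leibniz_lie y a _
      have e4 := e1.symm.trans e2
      rw [e3] at e4
      have e5 := add_right_cancel e4
      rw [lie_sub, e5]
      abel
    have h := bracketZero _ key
    exact sub_eq_zero.mp h
  -- closed formula along the chain
  have hform : ∀ j, 2 ≤ j → j ≤ N - 1 → ∀ w : L,
      sfun j w = -(ψ w) - ((j : ℂ) - 2) • sfun (N - 1) w := by
    intro j hj2
    induction j, hj2 using Nat.le_induction with
    | base =>
      intro _ w
      rw [hsfun2]
      norm_num
    | succ j hj ih =>
      intro hle w
      rw [hrec j hj hle w, ih (by omega) w]
      have hc : ((j : ℂ) + 1 - 2) = ((j : ℂ) - 2) + 1 := by ring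
      push_cast
      rw [hc, add_smul, one_smul]
      abel
  have hτ : ∀ w : L, ((N : ℂ) - 2) • sfun (N - 1) w = -(ψ w) := by
    intro w
    have h := hform (N - 1) (by omega) le_rfl w
    have hc : (((N : ℕ) - 1 : ℕ) : ℂ) - 2 = (N : ℂ) - 3 := by
      rw [Nat.cast_sub (by omega : 1 ≤ N)]
      push_cast
      ring
    rw [hc] at h
    have hsplit : ((N : ℂ) - 2) • sfun (N - 1) w
        = sfun (N - 1) w + ((N : ℂ) - 3) • sfun (N - 1) w := by
      rw [show ((N : ℂ) - 2) = 1 + ((N : ℂ) - 3) from by ring, add_smul, one_smul]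
    rw [hsplit]
    nth_rewrite 1 [h]
    abel
  have hKey : ∀ y w : L, ((N : ℂ) - 2) • ψ ⁅y, w⁆ = -⁅y, ψ w⁆ := by
    intro y w
    rw [hψbr, ← lie_smul, hτ, lie_neg]
  have hcN1 : (N : ℂ) - 1 ≠ 0 := by
    intro h
    have h1 : (N : ℂ) = 1 := by linear_combination h
    have h2 : N = 1 := by exact_mod_cast h1
    omega
  have hψ0 : ∀ w : L, ψ w = 0 := by
    intro w
    refine bracketZero _ (fun a b => ?_)
    have h1 : ((N : ℂ) - 2) • (((N : ℂ) - 2) • ψ ⁅a, ⁅b, w⁆⁆) = ⁅a, ⁅b, ψ w⁆⁆ := by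
      rw [hKey, smul_neg, ← lie_smul, hKey, lie_neg, neg_neg]
    have h2 : ((N : ℂ) - 2) • (((N : ℂ) - 2) • ψ ⁅b, ⁅a, w⁆⁆) = ⁅b, ⁅a, ψ w⁆⁆ := by
      rw [hKey, smul_neg, ← lie_smul, hKey, lie_neg, neg_neg]
    have h3 : ((N : ℂ) - 2) • (((N : ℂ) - 2) • ψ ⁅⁅a, b⁆, w⁆)
        = -(((N : ℂ) - 2) • ⁅⁅a, b⁆, ψ w⁆) := by
      rw [hKey, smul_neg]
    have e : ⁅a, ⁅b, ψ w⁆⁆ = -(((N : ℂ) - 2) • ⁅⁅a, b⁆, ψ w⁆) + ⁅b, ⁅a, ψ w⁆⁆ := by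
      rw [← h1, show ⁅a, ⁅b, w⁆⁆ = ⁅⁅a, b⁆, w⁆ + ⁅b, ⁅a, w⁆⁆ from leibniz_lie a b w,
        map_add, smul_add, smul_add, h3, h2]
    have e2 : ⁅a, ⁅b, ψ w⁆⁆ = ⁅⁅a, b⁆, ψ w⁆ + ⁅b, ⁅a, ψ w⁆⁆ := leibniz_lie a b (ψ w)
    have e4 := add_right_cancel (e2.symm.trans e)
    have e5 : ((N : ℂ) - 1) • ⁅⁅a, b⁆, ψ w⁆ = 0 := by
      rw [show ((N : ℂ) - 1) = 1 + ((N : ℂ) - 2) from by ring, add_smul, one_smul]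
      nth_rewrite 1 [e4]
      abel
    exact (smul_eq_zero.mp e5).resolve_left hcN1
  intro x y
  have h := hψ y x
  rw [hψ0, lie_zero] at h
  have h2 : φ ⁅x, y⁆ - (⁅φ x, y⁆ + ⁅x, φ y⁆) = 0 := by
    rw [← sub_sub]
    exact h.symm
  have := sub_eq_zero.mp h2
  exact this


lemma deriv_brS (φ : L →ₗ[ℂ] L) (hder : ∀ x y : L, φ ⁅x, y⁆ = ⁅φ x, y⁆ + ⁅x, φ y⁆) :
    ∀ l : List L, l ≠ [] → φ (itBracket l) = brS φ l := by
  intro l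
  induction l with
  | nil => intro h; exact absurd rfl h
  | cons a t ih =>
    intro _
    cases t with
    | nil => rfl
    | cons b s =>
      rw [itBracket_cons _ _ (by simp), brS_cons _ _ _ (by simp), hder, ih (by simp)]

end Abstract


namespace WittWork

variable {d : ℕ}

/-- monomial -/
noncomputable def T (d : ℕ) (a : Fin d → ℤ) : LaurentAlg d := AddMonoidAlgebra.single a 1

lemma T_mul (a b : Fin d → ℤ) : T d a * T d b = T d (a + b) := by
  rw [T, T, T, AddMonoidAlgebra.single_mul_single, mul_one]

lemma T_zero : T d 0 = 1 := rfl

lemma single_eq_smul_T (a : Fin d → ℤ) (c : ℂ) :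
    (AddMonoidAlgebra.single a c : LaurentAlg d) = c • T d a := by
  rw [T, AddMonoidAlgebra.smul_single', mul_one]

/-- the linear map underlying the degree derivation ∂ᵢ -/
noncomputable def delL (d : ℕ) (i : Fin d) : LaurentAlg d →ₗ[ℂ] LaurentAlg d :=
  Finsupp.lsum ℂ (fun a : Fin d → ℤ => (a i : ℂ) • (AddMonoidAlgebra.lsingle a : ℂ →ₗ[ℂ] LaurentAlg d))
    ∘ₗ (AddMonoidAlgebra.coeffLinearEquiv ℂ).toLinearMap

lemma delL_single (i : Fin d) (a : Fin d → ℤ) (c : ℂ) :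
    delL d i (AddMonoidAlgebra.single a c) = (a i : ℂ) • AddMonoidAlgebra.single a c := by
  rw [delL, LinearMap.comp_apply]
  exact Finsupp.lsum_single _ _ _ _

lemma delL_apply_coeff (i : Fin d) (f : LaurentAlg d) (b : Fin d → ℤ) :
    (delL d i f).coeff b = (b i : ℂ) * f.coeff b := by
  induction f using AddMonoidAlgebra.induction_linear with
  | zero => simp
  | add f g hf hg => rw [map_add, AddMonoidAlgebra.coeff_add, Finsupp.add_apply, hf, hg, AddMonoidAlgebra.coeff_add, Finsupp.add_apply, mul_add]
  | single a c =>
    rw [delL_single, AddMonoidAlgebra.coeff_smul, Finsupp.smul_apply]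
    by_cases h : a = b
    · subst h; rw [smul_eq_mul]
    · rw [AddMonoidAlgebra.coeff_single, Finsupp.single_apply, if_neg h, smul_zero, mul_zero]

/-- the degree derivation ∂ᵢ -/
noncomputable def del (d : ℕ) (i : Fin d) : WittAlg d where
  toLinearMap := delL d i
  map_one_eq_zero' := by
    show delL d i (AddMonoidAlgebra.single 0 1) = 0
    rw [delL_single]; simp
  leibniz' := by
    intro x y
    show delL d i (x * y) = x • delL d i y + y • delL d i x
    induction x using AddMonoidAlgebra.induction_linear with
    | zero => simp
    | add f g hf hg => rw [add_mul, map_add, hf, hg, map_add, add_smul, smul_add]; abel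
    | single a c =>
      induction y using AddMonoidAlgebra.induction_linear with
      | zero => simp
      | add f g hf hg => rw [mul_add, map_add, hf, hg, map_add, add_smul, smul_add]; abel
      | single b e =>
        rw [AddMonoidAlgebra.single_mul_single, delL_single, delL_single, delL_single,
          smul_eq_mul, smul_eq_mul, mul_smul_comm, mul_smul_comm,
          AddMonoidAlgebra.single_mul_single, AddMonoidAlgebra.single_mul_single]
        rw [show b + a = a + b from add_comm b a, show e * c = c * e from mul_comm e c]
        rw [← add_smul]
        congr 1
        push_cast [Pi.add_apply]
        ring

lemma del_apply (i : Fin d) (x : LaurentAlg d) : del d i x = delL d i x := rfl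

lemma del_T (i : Fin d) (a : Fin d → ℤ) : del d i (T d a) = (a i : ℂ) • T d a := by
  rw [del_apply, T, delL_single]

/-- extensionality from values on monomials -/
lemma der_ext (D1 D2 : WittAlg d) (h : ∀ a : Fin d → ℤ, D1 (T d a) = D2 (T d a)) : D1 = D2 := by
  apply Derivation.ext
  intro x
  induction x using AddMonoidAlgebra.induction_linear with
  | zero => simp
  | add f g hf hg => rw [map_add, map_add, hf, hg]
  | single a c => rw [single_eq_smul_T, Derivation.map_smul, Derivation.map_smul, h]


/-- the basis elements t^a ∂ᵢ -/
noncomputable def E (d : ℕ) (a : Fin d → ℤ) (i : Fin d) : WittAlg d := T d a • del d i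

lemma E_T (a : Fin d → ℤ) (i : Fin d) (b : Fin d → ℤ) :
    E d a i (T d b) = (b i : ℂ) • T d (a + b) := by
  rw [E, Derivation.smul_apply, del_T, smul_comm, smul_eq_mul, T_mul]

lemma bracket_del_E (j : Fin d) (a : Fin d → ℤ) (i : Fin d) :
    ⁅del d j, E d a i⁆ = (a j : ℂ) • E d a i := by
  apply der_ext
  intro b
  simp only [Derivation.commutator_apply, E_T, del_T, Derivation.map_smul,
    Derivation.smul_apply, smul_smul]
  rw [← sub_smul]
  congr 1
  push_cast [Pi.add_apply]
  ring

lemma bracket_EE (i : Fin d) :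
    ⁅E d (-Pi.single i (1:ℤ)) i, E d (Pi.single i (1:ℤ)) i⁆ = (2 : ℂ) • del d i := by
  apply der_ext
  intro b
  simp only [Derivation.commutator_apply, E_T, del_T, Derivation.map_smul,
    Derivation.smul_apply, smul_smul]
  have e1 : (-Pi.single i (1:ℤ) + (Pi.single i (1:ℤ) + b) : Fin d → ℤ) = b := by abel
  have e2 : (Pi.single i (1:ℤ) + (-Pi.single i (1:ℤ) + b) : Fin d → ℤ) = b := by abel
  rw [e1, e2]
  rw [← sub_smul]
  congr 1
  have h1 : ((Pi.single i (1:ℤ) : Fin d → ℤ) + b) i = 1 + b i := by simp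
  have h2 : (-(Pi.single i (1:ℤ) : Fin d → ℤ) + b) i = -1 + b i := by simp
  rw [h1, h2]
  push_cast
  ring

/-- the "coefficient" additive map of a derivation -/
noncomputable def coefD (D : WittAlg d) : (Fin d → ℤ) →+ LaurentAlg d where
  toFun a := T d (-a) * D (T d a)
  map_zero' := by
    show T d (-0) * D (T d 0) = 0
    rw [neg_zero, T_zero, Derivation.map_one_eq_zero, mul_zero]
  map_add' a b := by
    show T d (-(a + b)) * D (T d (a + b)) = T d (-a) * D (T d a) + T d (-b) * D (T d b)
    rw [← T_mul, Derivation.leibniz, smul_eq_mul, smul_eq_mul, mul_add,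
      ← mul_assoc, ← mul_assoc, T_mul, T_mul,
      show -(a + b) + a = -b from by abel, show -(a + b) + b = -a from by abel, add_comm]

lemma coefD_apply (D : WittAlg d) (a : Fin d → ℤ) :
    coefD D a = T d (-a) * D (T d a) := rfl

lemma T_mul_coefD (D : WittAlg d) (b : Fin d → ℤ) :
    T d b * coefD D b = D (T d b) := by
  rw [coefD_apply, ← mul_assoc, T_mul, show b + -b = 0 from by abel, T_zero, one_mul]

lemma coefD_sum (D : WittAlg d) (b : Fin d → ℤ) :
    coefD D b = ∑ i : Fin d, (b i : ℂ) • coefD D (Pi.single i (1:ℤ)) := by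
  conv_lhs => rw [show b = ∑ i, Pi.single i (b i) from (Finset.univ_sum_single b).symm]
  rw [map_sum]
  refine Finset.sum_congr rfl fun i _ => ?_
  have hps : (Pi.single i (b i) : Fin d → ℤ) = (b i) • (Pi.single i (1:ℤ) : Fin d → ℤ) := by
    rw [← Pi.single_smul, smul_eq_mul, mul_one]
  rw [hps, map_zsmul, ← Int.cast_smul_eq_zsmul ℂ]

lemma D_decomp (D : WittAlg d) :
    D = ∑ i : Fin d, (coefD D (Pi.single i (1:ℤ))) • del d i := by
  apply der_ext
  intro b
  have hsum : (∑ i : Fin d, (coefD D (Pi.single i (1:ℤ))) • del d i) (T d b)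
      = ∑ i : Fin d, ((coefD D (Pi.single i (1:ℤ))) • del d i) (T d b) := by
    have hco := map_sum (Derivation.coeFnAddMonoidHom :
        WittAlg d →+ (LaurentAlg d → LaurentAlg d))
      (fun i : Fin d => (coefD D (Pi.single i (1:ℤ))) • del d i) Finset.univ
    have h9 : (∑ i : Fin d, (coefD D (Pi.single i (1:ℤ))) • del d i) (T d b)
        = (∑ i : Fin d, ⇑((coefD D (Pi.single i (1:ℤ))) • del d i)) (T d b) :=
      congrFun hco (T d b)
    rw [h9, Finset.sum_apply]
  rw [hsum, ← T_mul_coefD D b, coefD_sum, Finset.mul_sum]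
  refine Finset.sum_congr rfl fun i _ => ?_
  rw [Derivation.smul_apply, del_T, mul_smul_comm, smul_comm]
  rw [smul_eq_mul, mul_comm]

lemma witt_perfect (D : WittAlg d) :
    D ∈ Submodule.span ℂ {u : WittAlg d | ∃ a b : WittAlg d, u = ⁅a, b⁆} := by
  have hmem : ∀ (f : LaurentAlg d) (i : Fin d),
      f • del d i ∈ Submodule.span ℂ {u : WittAlg d | ∃ a b : WittAlg d, u = ⁅a, b⁆} := by
    intro f i
    induction f using AddMonoidAlgebra.induction_linear with
    | zero => rw [zero_smul]; exact zero_mem _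
    | add f g hf hg => rw [add_smul]; exact add_mem hf hg
    | single a c =>
      rw [single_eq_smul_T, smul_assoc]
      refine Submodule.smul_mem _ _ ?_
      by_cases ha : a = 0
      · subst ha
        rw [T_zero, one_smul]
        have h2 := bracket_EE (d := d) i
        have h3 : del d i = (2:ℂ)⁻¹ • ⁅E d (-Pi.single i (1:ℤ)) i, E d (Pi.single i (1:ℤ)) i⁆ := by
          rw [h2, smul_smul]
          norm_num
        rw [h3]
        exact Submodule.smul_mem _ _ (Submodule.subset_span ⟨_, _, rfl⟩)
      · obtain ⟨j, hj⟩ : ∃ j, a j ≠ 0 := by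
          by_contra h
          push_neg at h
          exact ha (funext h)
        have h2 := bracket_del_E j a i
        have h3 : T d a • del d i = ((a j : ℂ))⁻¹ • ⁅del d j, E d a i⁆ := by
          rw [h2, smul_smul, inv_mul_cancel₀ (by exact_mod_cast hj), one_smul, E]
        rw [h3]
        exact Submodule.smul_mem _ _ (Submodule.subset_span ⟨_, _, rfl⟩)
  rw [D_decomp D]
  exact Submodule.sum_mem _ (fun i _ => hmem _ i)

lemma witt_centerless (hd : 1 ≤ d) (v : WittAlg d) (hv : ∀ x : WittAlg d, ⁅x, v⁆ = 0) :
    v = 0 := by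
  have heig : ∀ (a : Fin d → ℤ) (j : Fin d),
      delL d j (v (T d a)) = (a j : ℂ) • v (T d a) := by
    intro a j
    have h2 := congrArg (fun D : WittAlg d => D (T d a)) (hv (del d j))
    simp only [Derivation.commutator_apply] at h2
    rw [del_T, Derivation.map_smul] at h2
    have h3 : (0 : WittAlg d) (T d a) = 0 := rfl
    rw [h3] at h2
    have := sub_eq_zero.mp h2
    rw [← del_apply, this]
  have hT : ∀ a : Fin d → ℤ, v (T d a) = ((v (T d a)).coeff a) • T d a := by
    intro a
    apply AddMonoidAlgebra.ext
    apply Finsupp.ext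
    intro b
    by_cases hba : a = b
    · subst hba
      rw [AddMonoidAlgebra.coeff_smul, Finsupp.smul_apply, T, AddMonoidAlgebra.coeff_single, Finsupp.single_apply, if_pos rfl, smul_eq_mul, mul_one]
    · obtain ⟨j, hj⟩ : ∃ j, b j ≠ a j := by
        by_contra h
        push_neg at h
        exact hba (funext fun j => (h j).symm)
      have h3 := congrArg (fun f : LaurentAlg d => f.coeff b) (heig a j)
      simp only [delL_apply_coeff, Finsupp.smul_apply, smul_eq_mul] at h3
      have h4 : ((b j : ℂ) - (a j : ℂ)) * (v (T d a)).coeff b = 0 := by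
        rw [AddMonoidAlgebra.coeff_smul, Finsupp.smul_apply, smul_eq_mul] at h3
        rw [sub_mul, h3, sub_self]
      have h5 : (v (T d a)).coeff b = 0 := by
        rcases mul_eq_zero.mp h4 with h | h
        · exfalso
          apply hj
          have : (b j : ℂ) = (a j : ℂ) := by linear_combination h
          exact_mod_cast this
        · exact h
      rw [AddMonoidAlgebra.coeff_smul, Finsupp.smul_apply, h5, T, AddMonoidAlgebra.coeff_single, Finsupp.single_apply, if_neg hba, smul_zero]
  have hi : (0 : ℕ) < d := hd
  set i : Fin d := ⟨0, hi⟩ with hidef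
  set e : Fin d → ℤ := Pi.single i (1:ℤ) with hedef
  set c : (Fin d → ℤ) → ℂ := fun a => (v (T d a)).coeff a with hcdef
  have hstep : ∀ a : Fin d → ℤ, c (a + e) = c e := by
    intro a
    have h2 := congrArg (fun D : WittAlg d => D (T d e)) (hv (E d a i))
    simp only [Derivation.commutator_apply] at h2
    have h3 : (0 : WittAlg d) (T d e) = 0 := rfl
    rw [h3, hT e, Derivation.map_smul, E_T, Derivation.map_smul, hT (a + e)] at h2
    have he : (e i : ℤ) = 1 := by simp [hedef]
    rw [he] at h2
    simp only [Int.cast_one, one_smul, smul_smul] at h2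
    rw [← sub_smul] at h2
    have hTne : T d (a + e) ≠ 0 := by
      rw [T]
      intro hz
      exact one_ne_zero (AddMonoidAlgebra.single_eq_zero.mp hz)
    have h6 := sub_eq_zero.mp (Or.resolve_right (smul_eq_zero.mp h2) hTne)
    rw [one_mul] at h6
    exact h6.symm
  have hzero : c 0 = 0 := by
    show (v (T d 0)).coeff 0 = 0
    rw [T_zero, Derivation.map_one_eq_zero]
    rfl
  have hce : c e = 0 := by
    have h1 := hstep (-e)
    rw [show -e + e = 0 from by abel] at h1
    exact h1.symm.trans hzero
  have hall : ∀ a, c a = 0 := by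
    intro a
    have h1 := hstep (a - e)
    rw [show a - e + e = a from by abel] at h1
    exact h1.trans hce
  apply der_ext v 0
  intro a
  rw [hT a]
  have hc : (v (T d a)).coeff a = c a := rfl
  rw [hc, hall, zero_smul]
  rfl

end WittWork


/-- For `d ≥ 1` and `N ≥ 3`, every `N`-derivation of the generalized Witt algebra
`w_d = Der_ℂ(ℂ[t₁^{±1}, …, t_d^{±1}])` is a derivation: `Der⁽ᴺ⁾(w_d) = Der(w_d)`. -/
theorem nDerivations_wittAlgebra (d : ℕ) (hd : 1 ≤ d) (N : ℕ) (hN : 3 ≤ N) :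
    {φ : WittAlg d →ₗ[ℂ] WittAlg d | IsNDeriv ℂ N φ} =
      {φ : WittAlg d →ₗ[ℂ] WittAlg d |
        ∀ x y : WittAlg d, φ ⁅x, y⁆ = ⁅φ x, y⁆ + ⁅x, φ y⁆} := by
  ext φ
  simp only [Set.mem_setOf_eq]
  constructor
  · intro hφ
    exact abstract_nderiv (fun v hv => WittWork.witt_centerless hd v hv)
      WittWork.witt_perfect N hN φ hφ
  · intro hder
    intro x
    rw [sum_update]
    exact deriv_brS φ hder (List.ofFn x) (by simp [List.ofFn_eq_nil_iff]; omega)
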